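/- Let u = 0^n in Q_n and for 1 ≤ h ≤ n+1 let S_h = {u, u^1, ..., u^{h−1}} consist of u together with its first h−1 neighbors (u^i obtained by flipping coordinate i). Then the induced subgraph on S_h is a star K_{1,h−1}, and |N(S_h)| = (n−h+1) + (n−1)(h−1) − C(h−1, 2), which equals b_v(h; Q_n) = −h²/2 + (n − 1/2)h + 1 for 2 ≤ h ≤ n+1. -/

import Mathlib

/-- The `n`-dimensional hypercube: vertices are binary strings of length `n`,
adjacent iff they differ in exactly one coordinate. -/
def Qube (n : ℕ) : SimpleGraph (Fin n → Bool) where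
  Adj u v := hammingDist u v = 1
  symm := ⟨fun u v h => by show hammingDist v u = 1; rwa [hammingDist_comm]⟩
  loopless := ⟨fun u h => by simp only [hammingDist_self] at h; exact absurd h (by norm_num)⟩

instance (n : ℕ) : DecidableRel (Qube n).Adj :=
  fun u v => (inferInstance : Decidable (hammingDist u v = 1))

/-- The vertex boundary of a vertex set `H` in `Qube n`. -/
def vBoundary (n : ℕ) (H : Finset (Fin n → Bool)) : Finset (Fin n → Bool) :=
  Finset.univ.filter (fun v => v ∉ H ∧ ∃ u ∈ H, (Qube n).Adj u v)

/-- The minimum `m`-vertex boundary number of `Qube n`. -/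
noncomputable def bv (n m : ℕ) : ℕ :=
  sInf { k | ∃ H : Finset (Fin n → Bool), H.card = m ∧ (vBoundary n H).card = k }

/-- The hypercube with a vertex set `S` deleted. -/
def QDel (n : ℕ) (S : Finset (Fin n → Bool)) :
    SimpleGraph ((↑(Sᶜ) : Set (Fin n → Bool))) :=
  (Qube n).induce (↑(Sᶜ) : Set (Fin n → Bool))

/-- The `k`-extra connectivity of `Qube n`: the minimum size of a vertex set `T`
such that `Qube n − T` is disconnected and every component has at least `k+1` vertices. -/
noncomputable def extraConn (n k : ℕ) : ℕ :=
  sInf { t | ∃ T : Finset (Fin n → Bool), T.card = t ∧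
    ¬ (QDel n T).Connected ∧
    ∀ c : (QDel n T).ConnectedComponent,
      k + 1 ≤ {v | (QDel n T).connectedComponentMk v = c}.ncard }

/-!
Identify a vertex of `Q_n` with its support. Then `S_h` is the family of subsets of size at most
one of `L = {0, …, h-2}`, two vertices are adjacent iff their supports have a symmetric difference
of size one, and the boundary of `S_h` consists of the singletons outside `L` and the pairs
meeting `L`: `(n - k) + (C(n, 2) - C(n - k, 2))` vertices for `k = h - 1`.

Optimality comes from the bound `2 n m + 2 ≤ 2 |N(H)| + m (m + 1)` for every nonempty `H` with
`m` vertices, which the star attains. It is proved by induction on `n`, splitting `H` along the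
first coordinate into `H₀` and `H₁`: the layer `b` of `N(H)` contains
`N(H_b) ∪ (H_{1-b} \ H_b)`. If both halves are nonempty the two induction hypotheses add up,
the slack being `(|H₀| - 1) (|H₁| - 1) ≥ 0`; if one half is empty, the `m` neighbours across
the first coordinate pay for the extra dimension.
-/

open Finset
open scoped symmDiff

namespace Nat

lemma two_mul_choose_two (k : ℕ) : 2 * k.choose 2 = k * (k - 1) := by
  rw [Nat.choose_two_right, Nat.mul_div_cancel' (Nat.even_mul_pred_self k).two_dvd]

lemma add_choose_two (m k : ℕ) : (m + k).choose 2 = m.choose 2 + m * k + k.choose 2 := by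
  induction k with
  | zero => simp
  | succ k ih =>
    rw [← add_assoc, Nat.choose_succ_succ', ih, Nat.choose_succ_succ' k, Nat.choose_one_right,
      Nat.choose_one_right]
    ring

lemma choose_two_sub_choose_two_add_choose_two {n k : ℕ} (hk : k ≤ n) :
    n.choose 2 - (n - k).choose 2 + k.choose 2 = (n - 1) * k := by
  obtain ⟨m, rfl⟩ := Nat.exists_eq_add_of_le' hk
  have h2 := two_mul_choose_two k
  rw [Nat.add_sub_cancel, add_choose_two, add_assoc, Nat.add_sub_cancel_left]
  rcases k with _ | k
  · simp
  · simp only [Nat.add_sub_cancel] at h2 ⊢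
    rw [show m + (k + 1) - 1 = m + k by omega]
    nlinarith

end Nat

lemma hammingDist_cons {n : ℕ} {α : Type*} [DecidableEq α] (x y : α) (f g : Fin n → α) :
    hammingDist (Fin.cons x f : Fin (n + 1) → α) (Fin.cons y g) =
      (if x = y then 0 else 1) + hammingDist f g := by
  simp only [hammingDist, card_filter, Fin.sum_univ_succ, Fin.cons_zero, Fin.cons_succ, ite_not]

section SubsetCube

variable {α : Type*} [DecidableEq α]

def finsetEquivBoolFun [Fintype α] : Finset α ≃ (α → Bool) where
  toFun s i := decide (i ∈ s)
  invFun v := univ.filter (v · = true)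
  left_inv s := by ext; simp
  right_inv v := by funext i; simp

@[simp]
lemma finsetEquivBoolFun_apply [Fintype α] (s : Finset α) (i : α) :
    finsetEquivBoolFun s i = decide (i ∈ s) := rfl

lemma hammingDist_finsetEquivBoolFun [Fintype α] (s t : Finset α) :
    hammingDist (finsetEquivBoolFun s) (finsetEquivBoolFun t) = #(s ∆ t) := by
  unfold hammingDist; congr 1; ext i; simp [mem_symmDiff]; tauto

lemma card_singleton_symmDiff_eq_one {a : α} {t : Finset α} :
    #({a} ∆ t) = 1 ↔ t = ∅ ∨ a ∈ t ∧ #t = 2 := by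
  by_cases ha : a ∈ t
  · have : {a} ∆ t = t.erase a := by ext; simp [mem_symmDiff]; grind
    rw [this, card_erase_of_mem ha]
    have := card_pos.2 ⟨a, ha⟩
    simp [ha, ne_empty_of_mem ha]
  · have : {a} ∆ t = insert a t := by ext; simp [mem_symmDiff]; grind
    simp [this, card_insert_of_notMem ha, ha]

/-- The vertex boundary of `F` in the cube whose vertices are the subsets of `α`. -/
def cubeBoundary [Fintype α] (F : Finset (Finset α)) : Finset (Finset α) :=
  univ.filter fun t => t ∉ F ∧ ∃ s ∈ F, #(s ∆ t) = 1

def starFamily (L : Finset α) : Finset (Finset α) := insert ∅ (L.image singleton)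

lemma card_starFamily (L : Finset α) : #(starFamily L) = #L + 1 := by
  rw [starFamily, card_insert_of_notMem (by simp), card_image_of_injective _ singleton_injective]

lemma mem_cubeBoundary_starFamily [Fintype α] {L t : Finset α} :
    t ∈ cubeBoundary (starFamily L) ↔
      #t = 1 ∧ Disjoint t L ∨ #t = 2 ∧ ¬ Disjoint t L := by
  have hempty : (∅ : Finset α) ∆ t = t := bot_symmDiff t
  simp only [cubeBoundary, starFamily, mem_filter, mem_univ, true_and, mem_insert, mem_image,
    not_or, not_exists, not_and, exists_eq_or_imp, existsAndEq, and_true, hempty,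
    card_singleton_symmDiff_eq_one]
  constructor
  · rintro ⟨⟨ht0, htL⟩, h1 | ⟨a, haL, rfl | ⟨hat, h2⟩⟩⟩
    · obtain ⟨b, rfl⟩ := card_eq_one.1 h1
      exact Or.inl ⟨h1, disjoint_singleton_left.2 fun hb => htL b hb rfl⟩
    · exact absurd rfl ht0
    · exact Or.inr ⟨h2, not_disjoint_iff.2 ⟨a, hat, haL⟩⟩
  · rintro (⟨h1, hd⟩ | ⟨h2, hd⟩)
    · obtain ⟨b, rfl⟩ := card_eq_one.1 h1
      refine ⟨⟨singleton_ne_empty b, fun x hx hxb => ?_⟩, Or.inl h1⟩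
      exact disjoint_singleton_left.1 hd (singleton_inj.1 hxb ▸ hx)
    · obtain ⟨a, hat, haL⟩ := not_disjoint_iff.1 hd
      refine ⟨⟨?_, fun x _ hxt => ?_⟩, Or.inr ⟨a, haL, Or.inr ⟨hat, h2⟩⟩⟩
      · rintro rfl; simp at h2
      · subst hxt; simp at h2

lemma card_cubeBoundary_starFamily [Fintype α] (L : Finset α) :
    #(cubeBoundary (starFamily L)) =
      (Fintype.card α - #L) + ((Fintype.card α).choose 2 - (Fintype.card α - #L).choose 2) := by
  have : cubeBoundary (starFamily L) =
      powersetCard 1 Lᶜ ∪ (powersetCard 2 univ \ powersetCard 2 Lᶜ) := by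
    ext t
    simp [mem_cubeBoundary_starFamily, mem_powersetCard, subset_compl_iff_disjoint_right]
    tauto
  rw [this, card_union_of_disjoint, card_sdiff_of_subset (powersetCard_mono (subset_univ _)),
    card_powersetCard, card_powersetCard, card_powersetCard, card_compl, card_univ,
    Nat.choose_one_right]
  refine disjoint_left.2 fun t ht1 ht2 => ?_
  simp only [mem_powersetCard, mem_sdiff] at ht1 ht2
  omega

end SubsetCube

namespace Qube

variable {n : ℕ}

lemma mem_vBoundary {H : Finset (Fin n → Bool)} {w : Fin n → Bool} :
    w ∈ vBoundary n H ↔ w ∉ H ∧ ∃ u ∈ H, hammingDist u w = 1 := by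
  simp only [vBoundary, mem_filter, mem_univ, true_and]; rfl

@[simp]
lemma vBoundary_empty : vBoundary n ∅ = ∅ := by
  ext; simp [mem_vBoundary]

lemma card_vBoundary_image_finsetEquivBoolFun (F : Finset (Finset (Fin n))) :
    #(vBoundary n (F.image finsetEquivBoolFun)) = #(cubeBoundary F) := by
  refine (card_equiv finsetEquivBoolFun fun t => ?_).symm
  simp [cubeBoundary, mem_vBoundary, hammingDist_finsetEquivBoolFun,
    finsetEquivBoolFun.injective.mem_finset_image]

def starSet (L : Finset (Fin n)) : Finset (Fin n → Bool) :=
  (starFamily L).image finsetEquivBoolFun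

lemma starSet_eq_insert_image_update (L : Finset (Fin n)) :
    starSet L =
      insert (fun _ => false) (L.image fun i => Function.update (fun _ => false) i true) := by
  simp only [starSet, starFamily, image_insert, image_image]
  congr 2
  funext i j
  simp [Function.update_apply]

lemma card_starSet (L : Finset (Fin n)) : #(starSet L) = #L + 1 := by
  rw [starSet, card_image_of_injective _ finsetEquivBoolFun.injective, card_starFamily]

lemma card_vBoundary_starSet_add_choose_two (L : Finset (Fin n)) :
    #(vBoundary n (starSet L)) + (#L).choose 2 = (n - #L) + (n - 1) * #L := by
  rw [starSet, card_vBoundary_image_finsetEquivBoolFun, card_cubeBoundary_starFamily,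
    Fintype.card_fin, add_assoc,
    Nat.choose_two_sub_choose_two_add_choose_two (by simpa using card_le_univ L)]

lemma two_mul_mul_card_starSet_add_two (L : Finset (Fin n)) :
    2 * n * #(starSet L) + 2 =
      2 * #(vBoundary n (starSet L)) + #(starSet L) * (#(starSet L) + 1) := by
  have hB := card_vBoundary_starSet_add_choose_two L
  have hC := Nat.two_mul_choose_two #L
  have hL : #L ≤ n := by simpa using card_le_univ L
  rw [card_starSet]
  rcases Nat.eq_zero_or_pos #L with h0 | hpos
  · simp only [h0, Nat.choose_zero_succ, add_zero, Nat.sub_zero, mul_zero] at hB ⊢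
    omega
  · zify [hL, hpos, show 1 ≤ n by omega] at hB hC ⊢
    linear_combination -2 * hB + hC

def starEmbedding {ι : Type*} {g : ι → Fin n} (hg : g.Injective) :
    completeBipartiteGraph (Fin 1) ι ↪g Qube n where
  toFun := Sum.elim (fun _ => finsetEquivBoolFun ∅) fun j => finsetEquivBoolFun {g j}
  inj' := by
    refine Function.Injective.sumElim (fun _ _ _ => Subsingleton.elim _ _)
      (finsetEquivBoolFun.injective.comp (singleton_injective.comp hg)) fun _ j h => ?_
    exact singleton_ne_empty (g j) (finsetEquivBoolFun.injective h).symm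
  map_rel_iff' {x y} := by
    have hempty (s : Finset (Fin n)) : ∅ ∆ s = s := bot_symmDiff s
    have hempty' (s : Finset (Fin n)) : s ∆ ∅ = s := symmDiff_bot s
    rcases x with x | x <;> rcases y with y | y <;>
      simp [Qube, hammingDist_finsetEquivBoolFun, hempty, hempty', card_singleton_symmDiff_eq_one]

lemma range_starEmbedding {ι : Type*} [Fintype ι] {g : ι → Fin n} (hg : g.Injective) :
    Set.range (starEmbedding hg) = ↑(starSet (univ.image g)) := by
  ext v
  simp [starEmbedding, starSet, starFamily, Equiv.eq_symm_apply]

def slice (b : Bool) (H : Finset (Fin (n + 1) → Bool)) : Finset (Fin n → Bool) :=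
  univ.filter fun w => Fin.cons b w ∈ H

@[simp]
lemma mem_slice {b : Bool} {H : Finset (Fin (n + 1) → Bool)} {w : Fin n → Bool} :
    w ∈ slice b H ↔ Fin.cons b w ∈ H := by
  simp [slice]

lemma card_slice (b : Bool) (H : Finset (Fin (n + 1) → Bool)) :
    #(slice b H) = #(H.filter (· 0 = b)) := by
  refine card_nbij' (fun w => Fin.cons b w) Fin.tail ?_ ?_ ?_ ?_ <;> intro v hv <;>
    simp only [coe_filter, mem_coe, mem_slice, Set.mem_ofPred_eq] at hv ⊢
  · simpa using hv
  · rw [← hv.2, Fin.cons_self_tail]; exact hv.1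
  · simp
  · rw [← hv.2, Fin.cons_self_tail]

lemma card_slice_false_add_card_slice_true (H : Finset (Fin (n + 1) → Bool)) :
    #(slice false H) + #(slice true H) = #H := by
  simpa [card_slice] using card_filter_add_card_filter_not (s := H) (fun v => v 0 = false)

lemma cons_mem_vBoundary {b : Bool} {H : Finset (Fin (n + 1) → Bool)} {w : Fin n → Bool}
    (hw : w ∈ vBoundary n (slice b H) ∪ (slice (!b) H \ slice b H)) :
    Fin.cons b w ∈ vBoundary (n + 1) H := by
  rw [mem_vBoundary]
  rcases mem_union.1 hw with hw | hw
  · obtain ⟨hwH, u, hu, hdist⟩ := mem_vBoundary.1 hw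
    exact ⟨mt mem_slice.2 hwH, Fin.cons b u, mem_slice.1 hu, by simp [hammingDist_cons, hdist]⟩
  · obtain ⟨hw', hwH⟩ := mem_sdiff.1 hw
    exact ⟨mt mem_slice.2 hwH, Fin.cons (!b) w, mem_slice.1 hw', by simp [hammingDist_cons]⟩

lemma card_vBoundary_slice_add_le (H : Finset (Fin (n + 1) → Bool)) :
    #(vBoundary n (slice false H) ∪ (slice true H \ slice false H)) +
      #(vBoundary n (slice true H) ∪ (slice false H \ slice true H)) ≤
        #(vBoundary (n + 1) H) := by
  set A := vBoundary n (slice false H) ∪ (slice true H \ slice false H)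
  set B := vBoundary n (slice true H) ∪ (slice false H \ slice true H)
  let c (b : Bool) (w : Fin n → Bool) : Fin (n + 1) → Bool := Fin.cons b w
  have hdisj : Disjoint (A.image (c false)) (B.image (c true)) := by
    simp [c, disjoint_left]
  calc #A + #B = #(A.image (c false) ∪ B.image (c true)) := by
        rw [card_union_of_disjoint hdisj, card_image_of_injective _ (Fin.cons_right_injective _),
          card_image_of_injective _ (Fin.cons_right_injective _)]
    _ ≤ #(vBoundary (n + 1) H) := by
        refine card_le_card (union_subset ?_ ?_) <;> intro v hv <;>
          obtain ⟨w, hw, rfl⟩ := mem_image.1 hv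
        · exact cons_mem_vBoundary hw
        · exact cons_mem_vBoundary hw

theorem two_mul_mul_card_add_two_le {H : Finset (Fin n → Bool)} (hH : H.Nonempty) :
    2 * n * #H + 2 ≤ 2 * #(vBoundary n H) + #H * (#H + 1) := by
  induction n with
  | zero =>
    have : #H = 1 := le_antisymm (by simpa using card_le_univ H) hH.card_pos
    simp [this]
  | succ n ih =>
    have hbd := card_vBoundary_slice_add_le H
    have hpos := hH.card_pos
    rw [← card_slice_false_add_card_slice_true H] at hpos ⊢
    rcases (slice false H).eq_empty_or_nonempty with h0 | h0 <;>
      rcases (slice true H).eq_empty_or_nonempty with h1 | h1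
    · simp [h0, h1] at hpos
    · simp only [h0, vBoundary_empty, empty_union, union_empty, sdiff_empty, empty_sdiff,
        card_empty, zero_add] at hbd ⊢
      nlinarith [ih h1]
    · simp only [h1, vBoundary_empty, empty_union, union_empty, sdiff_empty, empty_sdiff,
        card_empty, add_zero] at hbd ⊢
      nlinarith [ih h0]
    · have hB := (add_le_add (card_le_card subset_union_left)
        (card_le_card subset_union_left)).trans hbd
      have : #(slice false H) + #(slice true H) ≤ #(slice false H) * #(slice true H) + 1 := by
        nlinarith [h0.card_pos, h1.card_pos]
      nlinarith [ih h0, ih h1]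

end Qube

lemma bv_eq_card_vBoundary {n m : ℕ} {H : Finset (Fin n → Bool)} (hH : #H = m)
    (hmin : ∀ H' : Finset (Fin n → Bool), #H' = m → #(vBoundary n H) ≤ #(vBoundary n H')) :
    bv n m = #(vBoundary n H) :=
  le_antisymm (Nat.sInf_le ⟨H, hH, rfl⟩)
    (le_csInf ⟨_, H, hH, rfl⟩ fun _ ⟨H', hH', hB⟩ => hB ▸ hmin H' hH')

lemma bv_eq_card_vBoundary_of_two_mul_mul_card_add_two_eq {n : ℕ} {H : Finset (Fin n → Bool)}
    (hH : H.Nonempty) (heq : 2 * n * #H + 2 = 2 * #(vBoundary n H) + #H * (#H + 1)) :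
    bv n #H = #(vBoundary n H) := by
  refine bv_eq_card_vBoundary rfl fun H' hH' => ?_
  have := Qube.two_mul_mul_card_add_two_le (H := H') (card_pos.1 (hH' ▸ hH.card_pos))
  rw [hH'] at this
  omega

theorem stmt16 (n h : ℕ) (h1 : 1 ≤ h) (h2 : h ≤ n + 1)
    (u : Fin n → Bool) (hu : u = fun _ => false)
    (Sh : Finset (Fin n → Bool))
    (hSh : Sh = insert u
      ((Finset.univ.filter (fun i : Fin n => (i : ℕ) < h - 1)).image
        (fun i => Function.update u i true))) :
    Nonempty (((Qube n).induce (↑Sh : Set (Fin n → Bool))) ≃g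
      completeBipartiteGraph (Fin 1) (Fin (h - 1))) ∧
    (vBoundary n Sh).card = (n + 1 - h) + (n - 1) * (h - 1) - Nat.choose (h - 1) 2 ∧
    (2 ≤ h →
      ((vBoundary n Sh).card = bv n h ∧
        2 * ((vBoundary n Sh).card : ℤ) = -(h : ℤ)^2 + (2 * n - 1) * h + 2)) := by
  obtain ⟨k, rfl⟩ : ∃ k, h = k + 1 := ⟨h - 1, by omega⟩
  have hk : k ≤ n := by omega
  set L : Finset (Fin n) := univ.filter fun i => (i : ℕ) < k
  have hL : L = univ.image (Fin.castLE hk) := coe_injective (by simp [L, Fin.range_castLE])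
  have hLcard : #L = k := by simp [L, Fin.card_filter_val_lt, hk]
  have hSh' : Sh = Qube.starSet L := by
    rw [Qube.starSet_eq_insert_image_update, hSh, hu, Nat.add_sub_cancel]
  have hcard : #Sh = k + 1 := by rw [hSh', Qube.card_starSet, hLcard]
  have hB := Qube.card_vBoundary_starSet_add_choose_two L
  have hE := Qube.two_mul_mul_card_starSet_add_two L
  rw [← hSh', hLcard] at hB
  rw [← hSh'] at hE
  simp only [Nat.add_sub_cancel]
  refine ⟨?_, by omega, fun _ => ⟨?_, ?_⟩⟩
  · rw [hSh', hL, ← Qube.range_starEmbedding (Fin.castLE_injective hk)]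
    exact ⟨(Qube.starEmbedding _).isoInduceRange.symm⟩
  · rw [← hcard, bv_eq_card_vBoundary_of_two_mul_mul_card_add_two_eq (card_pos.1 (by omega)) hE]
  · rw [hcard] at hE
    have hE' : (2 * n * (k + 1) + 2 : ℤ) = 2 * #(vBoundary n Sh) + (k + 1) * (k + 1 + 1) := by
      exact_mod_cast hE
    push_cast
    linear_combination -hE'
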